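/- arXiv:2002.10554 — 2 statements merged into one kernel-verified Lean document; each statement's English description precedes it below -/
import Mathlib

section
/- Let P(x_1,...,x_m) be a nonzero polynomial over ℂ, and for each i let d_i be defined recursively as follows: d_m is the degree of x_m in P, and writing P = x_m^{d_m} P_m(x_1,...,x_{m-1}) + Q_m where the degree of x_m in Q_m is less than d_m, define d_{m-1} as the degree of x_{m-1} in P_m, and so on. Let T_1,...,T_m be finite subsets of ℂ with |T_i| = k_i. Then the number of points (x_1,...,x_m) ∈ T_1 × ... × T_m with P(x_1,...,x_m) = 0 is at most (∑_{i=1}^m d_i/k_i) · ∏_{i=1}^m k_i. -/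
/-- The iterated degrees of a multivariate polynomial, defined by the recursive
leading-coefficient construction: peel off one variable, record its degree, and
recurse on the leading coefficient. -/
noncomputable def iterDeg : (m : ℕ) → MvPolynomial (Fin m) ℂ → Fin m → ℕ
  | 0, _ => fun i => i.elim0
  | m + 1, P =>
      Fin.cases ((MvPolynomial.finSuccEquiv ℂ m P).natDegree)
        (iterDeg m ((MvPolynomial.finSuccEquiv ℂ m P).leadingCoeff))

open Classical in
/-- Schwartz–Zippel lemma in counting form with iterated degrees: the number of zeros
of a nonzero polynomial `P` on the grid `T 0 × ⋯ × T (m-1)` is at most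
`(∑ i, d i / k i) * ∏ i, k i`, where `d i` are the iterated degrees and `k i = |T i|`. -/
theorem schwartz_zippel_count_iterated (m : ℕ) (P : MvPolynomial (Fin m) ℂ) (hP : P ≠ 0)
    (T : Fin m → Finset ℂ) (k : Fin m → ℕ) (hk : ∀ i, (T i).card = k i) :
    ((((Fintype.piFinset T).filter (fun x => MvPolynomial.eval x P = 0)).card : ℝ))
      ≤ (∑ i, (iterDeg m P i : ℝ) / (k i : ℝ)) * ∏ i, (k i : ℝ) := by
  induction m with
  | zero =>
    obtain ⟨a, rfl⟩ := MvPolynomial.C_surjective (Fin 0) P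
    have ha : a ≠ 0 := fun h => hP (by simp [h])
    have hempty : ((Fintype.piFinset T).filter
        (fun x => MvPolynomial.eval x (MvPolynomial.C a) = 0)) = ∅ := by
      apply Finset.filter_eq_empty_iff.mpr
      intro x _
      simpa using ha
    rw [hempty]
    simp
  | succ m ih =>
    by_cases hk0 : k 0 = 0
    · have hT0 : T 0 = ∅ := Finset.card_eq_zero.mp (by rw [hk 0, hk0])
      have hpi : Fintype.piFinset T = ∅ := by
        ext x
        simp only [Fintype.mem_piFinset, Finset.notMem_empty, iff_false]
        intro h
        have := h 0
        simp [hT0] at this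
      rw [hpi]
      have : ∏ i, (k i : ℝ) = 0 := by
        rw [Fin.prod_univ_succ, hk0]
        simp
      simp [this]
    set Q := MvPolynomial.finSuccEquiv ℂ m P with hQdef
    have hQ : Q ≠ 0 := fun h =>
      hP ((MvPolynomial.finSuccEquiv ℂ m).injective (h.trans (map_zero _).symm))
    set L := Q.leadingCoeff with hLdef
    have hL : L ≠ 0 := Polynomial.leadingCoeff_ne_zero.mpr hQ
    set d0 := Q.natDegree with hd0
    set T' : Fin m → Finset ℂ := fun i => T i.succ with hT'
    set k' : Fin m → ℕ := fun i => k i.succ with hk'def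
    have hk' : ∀ i, (T' i).card = k' i := fun i => hk i.succ
    set B := Fintype.piFinset T' with hB
    -- counting identity
    have key : ((Fintype.piFinset T).filter (fun x => MvPolynomial.eval x P = 0)).card
        = ∑ xs ∈ B, ((T 0).filter
            (fun a => MvPolynomial.eval (Fin.cons a xs) P = 0)).card := by
      rw [← Finset.card_sigma]
      apply Finset.card_nbij' (fun x => ⟨Fin.tail x, x 0⟩)
        (fun q => Fin.cons q.2 q.1)
      · intro x hx
        simp only [Finset.mem_coe, Finset.mem_filter, Fintype.mem_piFinset] at hx
        simp only [Finset.mem_coe, hB, hT', Finset.mem_sigma, Finset.mem_filter, Fintype.mem_piFinset]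
        refine ⟨fun i => hx.1 i.succ, hx.1 0, ?_⟩
        rw [Fin.cons_self_tail]
        exact hx.2
      · intro q hq
        simp only [Finset.mem_coe, hB, hT', Finset.mem_sigma, Finset.mem_filter, Fintype.mem_piFinset] at hq
        simp only [Finset.mem_coe, Finset.mem_filter, Fintype.mem_piFinset]
        refine ⟨?_, hq.2.2⟩
        intro i
        refine Fin.cases ?_ ?_ i
        · simpa using hq.2.1
        · intro j
          simpa using hq.1 j
      · intro x _
        simp [Fin.cons_self_tail]
      · intro q _
        simp
    -- root bound for good fibers
    have bound1 : ∀ xs ∈ B, MvPolynomial.eval xs L ≠ 0 →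
        ((T 0).filter (fun a => MvPolynomial.eval (Fin.cons a xs) P = 0)).card ≤ d0 := by
      intro xs _ hxs
      set q : Polynomial ℂ := Q.map (MvPolynomial.eval xs) with hq
      have hqne : q ≠ 0 := by
        intro h
        apply hxs
        have : q.coeff d0 = 0 := by rw [h]; simp
        rwa [hq, Polynomial.coeff_map] at this
      have hsub : ((T 0).filter (fun a => MvPolynomial.eval (Fin.cons a xs) P = 0))
          ⊆ q.roots.toFinset := by
        intro a ha
        simp only [Finset.mem_filter] at ha
        rw [Multiset.mem_toFinset, Polynomial.mem_roots hqne, Polynomial.IsRoot.def]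
        rw [MvPolynomial.eval_eq_eval_mv_eval'] at ha
        exact ha.2
      calc ((T 0).filter (fun a => MvPolynomial.eval (Fin.cons a xs) P = 0)).card
          ≤ q.roots.toFinset.card := Finset.card_le_card hsub
        _ ≤ Multiset.card q.roots := Multiset.toFinset_card_le _
        _ ≤ q.natDegree := Polynomial.card_roots' q
        _ ≤ d0 := Polynomial.natDegree_map_le
    have bound0 : ∀ xs : Fin m → ℂ,
        ((T 0).filter (fun a => MvPolynomial.eval (Fin.cons a xs) P = 0)).card ≤ k 0 := by
      intro xs
      rw [← hk 0]
      exact Finset.card_le_card (Finset.filter_subset _ _)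
    set B0 := B.filter (fun xs => MvPolynomial.eval xs L = 0) with hB0
    set B1 := B.filter (fun xs => ¬ MvPolynomial.eval xs L = 0) with hB1
    have hIH : ((B0.card : ℝ)) ≤ (∑ i, (iterDeg m L i : ℝ) / (k' i : ℝ)) * ∏ i, (k' i : ℝ) :=
      ih L hL T' k' hk'
    have hB1card : (B1.card : ℝ) ≤ ∏ i, (k' i : ℝ) := by
      have h1 : B1.card ≤ B.card := Finset.card_le_card (Finset.filter_subset _ _)
      have h2 : B.card = ∏ i, k' i := by
        rw [hB, Fintype.card_piFinset]
        exact Finset.prod_congr rfl (fun i _ => hk' i)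
      calc (B1.card : ℝ) ≤ (B.card : ℝ) := by exact_mod_cast h1
        _ = ∏ i, (k' i : ℝ) := by rw [h2]; push_cast; rfl
    have hk0pos : (0 : ℝ) < (k 0 : ℝ) := by
      exact_mod_cast Nat.pos_of_ne_zero hk0
    have hkprodnn : (0 : ℝ) ≤ ∏ i, (k' i : ℝ) :=
      Finset.prod_nonneg (fun i _ => by positivity)
    -- degrees rewrite
    have hdeg0 : iterDeg (m + 1) P 0 = d0 := rfl
    have hdegS : ∀ i : Fin m, iterDeg (m + 1) P i.succ = iterDeg m L i := fun i => rfl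
    -- main estimate
    have main : ((((Fintype.piFinset T).filter
          (fun x => MvPolynomial.eval x P = 0)).card : ℝ))
        ≤ (B0.card : ℝ) * (k 0 : ℝ) + (B1.card : ℝ) * (d0 : ℝ) := by
      rw [key]
      push_cast
      rw [← Finset.sum_filter_add_sum_filter_not B (fun xs => MvPolynomial.eval xs L = 0)]
      gcongr with i
      · calc ∑ xs ∈ B0, (((T 0).filter
              (fun a => MvPolynomial.eval (Fin.cons a xs) P = 0)).card : ℝ)
            ≤ ∑ _xs ∈ B0, (k 0 : ℝ) := by
              apply Finset.sum_le_sum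
              intro xs _
              exact_mod_cast bound0 xs
          _ = (B0.card : ℝ) * (k 0 : ℝ) := by rw [Finset.sum_const]; ring
      · calc ∑ xs ∈ B1, (((T 0).filter
              (fun a => MvPolynomial.eval (Fin.cons a xs) P = 0)).card : ℝ)
            ≤ ∑ xs ∈ B1, (d0 : ℝ) := by
              apply Finset.sum_le_sum
              intro xs hxs
              rw [hB1, Finset.mem_filter] at hxs
              exact_mod_cast bound1 xs hxs.1 hxs.2
          _ = (B1.card : ℝ) * (d0 : ℝ) := by rw [Finset.sum_const]; ring
    refine main.trans ?_
    rw [Fin.sum_univ_succ, Fin.prod_univ_succ, hdeg0]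
    simp only [hdegS]
    have expand : ((d0 : ℝ) / (k 0 : ℝ) + ∑ i : Fin m, (iterDeg m L (i) : ℝ) / (k i.succ : ℝ))
        * ((k 0 : ℝ) * ∏ i : Fin m, (k i.succ : ℝ))
        = (d0 : ℝ) * (∏ i : Fin m, (k i.succ : ℝ))
          + (∑ i : Fin m, (iterDeg m L i : ℝ) / (k i.succ : ℝ))
            * (∏ i : Fin m, (k i.succ : ℝ)) * (k 0 : ℝ) := by
      field_simp
    rw [expand]
    have t1 : (B0.card : ℝ) * (k 0 : ℝ)
        ≤ (∑ i : Fin m, (iterDeg m L i : ℝ) / (k i.succ : ℝ))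
            * (∏ i : Fin m, (k i.succ : ℝ)) * (k 0 : ℝ) := by
      apply mul_le_mul_of_nonneg_right _ (le_of_lt hk0pos)
      simpa [hk'def] using hIH
    have t2 : (B1.card : ℝ) * (d0 : ℝ) ≤ (d0 : ℝ) * (∏ i : Fin m, (k i.succ : ℝ)) := by
      rw [mul_comm]
      apply mul_le_mul_of_nonneg_left _ (by positivity)
      simpa [hk'def] using hB1card
    linarith
end

section
/- Let P(x_1,...,x_m) be a nonzero polynomial over ℂ with iterated degrees d_1,...,d_m (defined by the recursive leading-coefficient construction). Let D_i be a probability distribution on a finite set T_i ⊆ ℂ with |T_i| = k_i that is (C, d_i)-uniform, and let D be the product distribution. Then the probability under D that P(x_1,...,x_m) = 0 is at most ∑_{i=1}^m C d_i / k_i. -/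
open Finset

lemma sum_piFinset_succ' {n : ℕ} {α : Fin (n + 1) → Type*} [∀ i, DecidableEq (α i)]
    (S : ∀ i, Finset (α i)) {M : Type*} [AddCommMonoid M] (f : (∀ i, α i) → M) :
    ∑ x ∈ Fintype.piFinset S, f x
      = ∑ a ∈ S 0, ∑ y ∈ Fintype.piFinset (Fin.tail S), f (Fin.cons a y) := by
  rw [← Finset.sum_product']
  refine Finset.sum_nbij' (fun x => (x 0, Fin.tail x)) (fun p => Fin.cons p.1 p.2) ?_ ?_ ?_ ?_ ?_
  · intro x hx
    rw [Fin.mem_piFinset_iff_zero_tail] at hx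
    simpa [Finset.mem_product] using hx
  · rintro ⟨a, y⟩ hp
    simp only [Finset.mem_product] at hp
    rw [Fin.mem_piFinset_iff_zero_tail]
    simpa [Fin.tail_cons] using hp
  · intro x _; exact Fin.cons_self_tail x
  · rintro ⟨a, y⟩ _; simp [Fin.tail_cons]
  · intro x _; simp [Fin.cons_self_tail]

open Classical in
theorem psz_aux (m : ℕ) :
    ∀ (P : MvPolynomial (Fin m) ℂ), P ≠ 0 →
    ∀ (T : Fin m → Finset ℂ) (k : Fin m → ℕ), (∀ i, (T i).card = k i) →
    (∀ i, 0 < k i) → ∀ (C : ℝ) (D : Fin m → ℂ → ℝ),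
    (∀ i x, 0 ≤ D i x) → (∀ i, ∀ x ∉ T i, D i x = 0) →
    (∀ i, ∑ x ∈ T i, D i x = 1) →
    (∀ i, ∀ U : Finset ℂ, U.card ≤ iterDeg m P i → ∑ x ∈ U, D i x ≤ C * U.card / k i) →
    ∑ x ∈ Fintype.piFinset T, (if MvPolynomial.eval x P = 0 then ∏ i, D i (x i) else 0)
      ≤ ∑ i, C * (iterDeg m P i : ℝ) / (k i : ℝ) := by
  induction m with
  | zero =>
    intro P hP T k hk hkpos C D hD0 hDsupp hDsum hunif
    have hx : ∀ x : Fin 0 → ℂ, MvPolynomial.eval x P ≠ 0 := by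
      intro x h
      apply hP
      have hxe : x = (fun i : Fin 0 => i.elim0) := funext fun i => i.elim0
      subst hxe
      apply (MvPolynomial.isEmptyRingEquiv ℂ (Fin 0)).injective
      rw [map_zero, MvPolynomial.isEmptyRingEquiv_apply, ← h]
      rw [MvPolynomial.eval_eq, Finset.sum_eq_single (0 : Fin 0 →₀ ℕ)] <;> simp [Subsingleton.elim _ (0 : Fin 0 →₀ ℕ)]
      rfl
    simp [hx]
  | succ n ih =>
    intro P hP T k hk hkpos C D hD0 hDsupp hDsum hunif
    set Q := MvPolynomial.finSuccEquiv ℂ n P with hQdef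
    have hQ : Q ≠ 0 := by
      intro h
      apply hP
      apply (MvPolynomial.finSuccEquiv ℂ n).injective
      rw [map_zero]
      exact h
    set L := Q.leadingCoeff with hLdef
    have hL : L ≠ 0 := Polynomial.leadingCoeff_ne_zero.mpr hQ
    set d0 := Q.natDegree with hd0
    have hdeg0 : iterDeg (n + 1) P 0 = d0 := by simp [iterDeg]; rfl
    have hdegs : ∀ i : Fin n, iterDeg (n + 1) P i.succ = iterDeg n L i := by
      intro i; simp [iterDeg]; rfl
    set w : (Fin n → ℂ) → ℝ := fun y => ∏ i, D i.succ (y i) with hw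
    have hw0 : ∀ y, 0 ≤ w y := fun y => Finset.prod_nonneg fun i _ => hD0 _ _
    have hwsum : ∑ y ∈ Fintype.piFinset (Fin.tail T), w y = 1 := by
      rw [← Finset.prod_univ_sum]
      exact Finset.prod_eq_one fun i _ => hDsum i.succ
    have hCd : (0 : ℝ) ≤ C * d0 / k 0 := by
      rcases Nat.eq_zero_or_pos d0 with h | h
      · simp [h]
      · have h1 : ∃ x ∈ T 0, D 0 x ≠ 0 := by
          by_contra hcon
          push_neg at hcon
          have := hDsum 0
          rw [Finset.sum_eq_zero hcon] at this
          norm_num at this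
        obtain ⟨x0, hx0T, hx0⟩ := h1
        have hpos : 0 < D 0 x0 := lt_of_le_of_ne (hD0 0 x0) (Ne.symm hx0)
        have h2 := hunif 0 {x0} (by rw [hdeg0]; simp; exact h)
        simp only [Finset.sum_singleton, Finset.card_singleton, Nat.cast_one, mul_one] at h2
        have hCk : 0 < C / (k 0 : ℝ) := lt_of_lt_of_le hpos h2
        have h3 : 0 ≤ (C / k 0) * d0 := mul_nonneg hCk.le (Nat.cast_nonneg _)
        calc (0:ℝ) ≤ (C / k 0) * d0 := h3
          _ = C * d0 / k 0 := by ring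
    rw [sum_piFinset_succ']
    have key : ∀ a ∈ T 0, ∀ y ∈ Fintype.piFinset (Fin.tail T),
        (if MvPolynomial.eval (Fin.cons a y : Fin (n + 1) → ℂ) P = 0
            then ∏ i, D i ((Fin.cons a y : Fin (n + 1) → ℂ) i) else 0)
          ≤ (if MvPolynomial.eval y L = 0 then D 0 a * w y else 0)
            + (if MvPolynomial.eval y L ≠ 0 ∧
                Polynomial.eval a (Q.map (MvPolynomial.eval y)) = 0 then D 0 a * w y else 0) := by
      intro a _ y _
      have hprod : (∏ i, D i ((Fin.cons a y : Fin (n + 1) → ℂ) i)) = D 0 a * w y := by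
        rw [Fin.prod_univ_succ]
        simp [hw]
      have hnn : 0 ≤ D 0 a * w y := mul_nonneg (hD0 0 a) (hw0 y)
      by_cases hz : MvPolynomial.eval (Fin.cons a y : Fin (n + 1) → ℂ) P = 0
      · rw [if_pos hz, hprod]
        by_cases hLy : MvPolynomial.eval y L = 0
        · rw [if_pos hLy]
          have h4 : (0:ℝ) ≤ (if MvPolynomial.eval y L ≠ 0 ∧
              Polynomial.eval a (Q.map (MvPolynomial.eval y)) = 0 then D 0 a * w y else 0) := by
            split <;> simp [hnn]
          linarith
        · have heval : Polynomial.eval a (Q.map (MvPolynomial.eval y)) = 0 := by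
            rw [← MvPolynomial.eval_eq_eval_mv_eval']
            exact hz
          rw [if_neg hLy, if_pos ⟨hLy, heval⟩]
          linarith
      · rw [if_neg hz]
        have h1 : (0:ℝ) ≤ (if MvPolynomial.eval y L = 0 then D 0 a * w y else 0) := by
          split <;> simp [hnn]
        have h2 : (0:ℝ) ≤ (if MvPolynomial.eval y L ≠ 0 ∧
            Polynomial.eval a (Q.map (MvPolynomial.eval y)) = 0 then D 0 a * w y else 0) := by
          split <;> simp [hnn]
        linarith
    have hA : ∑ a ∈ T 0, ∑ y ∈ Fintype.piFinset (Fin.tail T),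
          (if MvPolynomial.eval y L = 0 then D 0 a * w y else 0)
        ≤ ∑ i : Fin n, C * (iterDeg n L i : ℝ) / (k i.succ : ℝ) := by
      have hstep : ∀ a ∈ T 0, ∑ y ∈ Fintype.piFinset (Fin.tail T),
          (if MvPolynomial.eval y L = 0 then D 0 a * w y else 0)
          = D 0 a * ∑ y ∈ Fintype.piFinset (Fin.tail T),
              (if MvPolynomial.eval y L = 0 then w y else 0) := by
        intro a _
        rw [Finset.mul_sum]
        exact Finset.sum_congr rfl fun y _ => by split <;> simp
      calc ∑ a ∈ T 0, ∑ y ∈ Fintype.piFinset (Fin.tail T),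
              (if MvPolynomial.eval y L = 0 then D 0 a * w y else 0)
          = ∑ a ∈ T 0, D 0 a * ∑ y ∈ Fintype.piFinset (Fin.tail T),
              (if MvPolynomial.eval y L = 0 then w y else 0) :=
            Finset.sum_congr rfl hstep
        _ = ∑ y ∈ Fintype.piFinset (Fin.tail T),
              (if MvPolynomial.eval y L = 0 then w y else 0) := by
            rw [← Finset.sum_mul, hDsum 0, one_mul]
        _ ≤ ∑ i : Fin n, C * (iterDeg n L i : ℝ) / (k i.succ : ℝ) :=
            ih L hL (Fin.tail T) (fun i => k i.succ) (fun i => hk i.succ)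
              (fun i => hkpos i.succ) C (fun i => D i.succ) (fun i x => hD0 i.succ x)
              (fun i x hx => hDsupp i.succ x hx) (fun i => hDsum i.succ)
              (fun i U hU => hunif i.succ U (by rw [hdegs i]; exact hU))
    have hB : ∑ a ∈ T 0, ∑ y ∈ Fintype.piFinset (Fin.tail T),
          (if MvPolynomial.eval y L ≠ 0 ∧
              Polynomial.eval a (Q.map (MvPolynomial.eval y)) = 0 then D 0 a * w y else 0)
        ≤ C * d0 / k 0 := by
      rw [Finset.sum_comm]
      have hinner : ∀ y ∈ Fintype.piFinset (Fin.tail T),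
          ∑ a ∈ T 0, (if MvPolynomial.eval y L ≠ 0 ∧
              Polynomial.eval a (Q.map (MvPolynomial.eval y)) = 0 then D 0 a * w y else 0)
            ≤ w y * (C * d0 / k 0) := by
        intro y _
        by_cases hLy : MvPolynomial.eval y L = 0
        · have hz : ∀ a ∈ T 0, (if MvPolynomial.eval y L ≠ 0 ∧
              Polynomial.eval a (Q.map (MvPolynomial.eval y)) = 0 then D 0 a * w y else 0) = 0 := by
            intro a _
            rw [if_neg (by tauto)]
          rw [Finset.sum_eq_zero hz]
          exact mul_nonneg (hw0 y) hCd
        · set q := Q.map (MvPolynomial.eval y) with hq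
          have hqcoeff : q.coeff d0 ≠ 0 := by
            rw [hq, Polynomial.coeff_map]
            exact hLy
          have hqne : q ≠ 0 := fun h => hqcoeff (by simp [h])
          have hqdeg : q.natDegree ≤ d0 := Polynomial.natDegree_map_le
          set U := (T 0).filter (fun a => Polynomial.eval a q = 0) with hU
          have hUsub : U ⊆ q.roots.toFinset := by
            intro a ha
            rw [hU, Finset.mem_filter] at ha
            rw [Multiset.mem_toFinset, Polynomial.mem_roots hqne]
            exact ha.2
          have hUcard : U.card ≤ d0 :=
            calc U.card ≤ q.roots.toFinset.card := Finset.card_le_card hUsub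
              _ ≤ Multiset.card q.roots := Multiset.toFinset_card_le _
              _ ≤ q.natDegree := Polynomial.card_roots' q
              _ ≤ d0 := hqdeg
          have hsum : ∑ a ∈ T 0, (if MvPolynomial.eval y L ≠ 0 ∧
              Polynomial.eval a q = 0 then D 0 a * w y else 0)
              = (∑ a ∈ U, D 0 a) * w y := by
            rw [hU, Finset.sum_filter, Finset.sum_mul]
            refine Finset.sum_congr rfl fun a _ => ?_
            by_cases h : Polynomial.eval a q = 0
            · rw [if_pos ⟨hLy, h⟩, if_pos h]
            · rw [if_neg (by tauto), if_neg h, zero_mul]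
          rw [hsum]
          have h1 := hunif 0 U (by rw [hdeg0]; exact hUcard)
          have hbound : (∑ a ∈ U, D 0 a) ≤ C * d0 / k 0 := by
            rcases Nat.eq_zero_or_pos U.card with hU0 | hU0
            · rw [Finset.card_eq_zero.mp hU0]
              simpa using hCd
            · have hnn : (0:ℝ) ≤ ∑ a ∈ U, D 0 a := Finset.sum_nonneg fun a _ => hD0 0 a
              have h2 : (0:ℝ) ≤ C * U.card / k 0 := le_trans hnn h1
              have hk0 : (0:ℝ) < k 0 := by exact_mod_cast hkpos 0
              have hUc : (0:ℝ) < U.card := by exact_mod_cast hU0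
              have hC : 0 ≤ C := by
                by_contra hC
                push_neg at hC
                have h3 : C * U.card / k 0 < 0 :=
                  div_neg_of_neg_of_pos (mul_neg_of_neg_of_pos hC hUc) hk0
                linarith
              calc (∑ a ∈ U, D 0 a) ≤ C * U.card / k 0 := h1
                _ ≤ C * d0 / k 0 := by
                    gcongr
          calc (∑ a ∈ U, D 0 a) * w y ≤ (C * d0 / k 0) * w y :=
                mul_le_mul_of_nonneg_right hbound (hw0 y)
            _ = w y * (C * d0 / k 0) := mul_comm _ _
      calc ∑ y ∈ Fintype.piFinset (Fin.tail T), ∑ a ∈ T 0,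
              (if MvPolynomial.eval y L ≠ 0 ∧
                Polynomial.eval a (Q.map (MvPolynomial.eval y)) = 0 then D 0 a * w y else 0)
          ≤ ∑ y ∈ Fintype.piFinset (Fin.tail T), w y * (C * d0 / k 0) :=
            Finset.sum_le_sum hinner
        _ = (C * d0 / k 0) := by rw [← Finset.sum_mul, hwsum]; try rw [one_mul]
    have hR : ∑ i : Fin (n + 1), C * (iterDeg (n + 1) P i : ℝ) / (k i : ℝ)
        = C * d0 / k 0 + ∑ i : Fin n, C * (iterDeg n L i : ℝ) / (k i.succ : ℝ) := by
      rw [Fin.sum_univ_succ, hdeg0]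
      congr 1
    calc ∑ a ∈ T 0, ∑ y ∈ Fintype.piFinset (Fin.tail T),
            (if MvPolynomial.eval (Fin.cons a y : Fin (n + 1) → ℂ) P = 0
              then ∏ i, D i ((Fin.cons a y : Fin (n + 1) → ℂ) i) else 0)
        ≤ ∑ a ∈ T 0, ∑ y ∈ Fintype.piFinset (Fin.tail T),
            ((if MvPolynomial.eval y L = 0 then D 0 a * w y else 0)
              + (if MvPolynomial.eval y L ≠ 0 ∧
                  Polynomial.eval a (Q.map (MvPolynomial.eval y)) = 0 then D 0 a * w y else 0)) :=
          Finset.sum_le_sum fun a ha => Finset.sum_le_sum fun y hy => key a ha y hy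
      _ = (∑ a ∈ T 0, ∑ y ∈ Fintype.piFinset (Fin.tail T),
            (if MvPolynomial.eval y L = 0 then D 0 a * w y else 0))
          + (∑ a ∈ T 0, ∑ y ∈ Fintype.piFinset (Fin.tail T),
            (if MvPolynomial.eval y L ≠ 0 ∧
                Polynomial.eval a (Q.map (MvPolynomial.eval y)) = 0 then D 0 a * w y else 0)) := by
          rw [← Finset.sum_add_distrib]
          exact Finset.sum_congr rfl fun a _ => Finset.sum_add_distrib
      _ ≤ (∑ i : Fin n, C * (iterDeg n L i : ℝ) / (k i.succ : ℝ)) + C * d0 / k 0 :=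
          add_le_add hA hB
      _ = ∑ i : Fin (n + 1), C * (iterDeg (n + 1) P i : ℝ) / (k i : ℝ) := by
          rw [hR, add_comm]

open Classical in
/-- Probabilistic Schwartz–Zippel lemma for near-uniform product distributions:
if each `D i` is a `(C, d i)`-uniform distribution on `T i` with `|T i| = k i`, where
the `d i` are the iterated degrees of a nonzero polynomial `P`, then the probability
under the product distribution that `P` vanishes is at most `∑ i, C * d i / k i`. -/
theorem probabilistic_schwartz_zippel (m : ℕ) (P : MvPolynomial (Fin m) ℂ) (hP : P ≠ 0)
    (T : Fin m → Finset ℂ) (k : Fin m → ℕ) (hk : ∀ i, (T i).card = k i)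
    (hkpos : ∀ i, 0 < k i) (C : ℝ) (D : Fin m → ℂ → ℝ)
    (hD0 : ∀ i x, 0 ≤ D i x) (hDsupp : ∀ i, ∀ x ∉ T i, D i x = 0)
    (hDsum : ∀ i, ∑ x ∈ T i, D i x = 1)
    (hunif : ∀ i, ∀ U : Finset ℂ, U.card ≤ iterDeg m P i →
      ∑ x ∈ U, D i x ≤ C * U.card / k i) :
    ∑ x ∈ Fintype.piFinset T,
        (if MvPolynomial.eval x P = 0 then ∏ i, D i (x i) else 0)
      ≤ ∑ i, C * (iterDeg m P i : ℝ) / (k i : ℝ) := by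
  exact psz_aux m P hP T k hk hkpos C D hD0 hDsupp hDsum hunif
end
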